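/- Let X be a nonzero real m×n matrix. Then SIM(X) is the unique solution of the optimization problem: minimize ‖Z‖_* over all real n×n matrices Z subject to X = XZ; moreover, the minimum objective value equals rank(X). That is: (i) X·SIM(X) = X, (ii) ‖SIM(X)‖_* = rank(X), (iii) every n×n matrix Z with X = XZ satisfies ‖Z‖_* ≥ rank(X), and (iv) if X = XZ and ‖Z‖_* = rank(X) then Z = SIM(X). -/

import Mathlib

open Matrix

/-- The nuclear norm of a real matrix: the sum of its singular values
(the square roots of the eigenvalues of `Aᵀ * A`). -/
noncomputable def nuclearNorm {m n : Type*} [Fintype m] [Fintype n] [DecidableEq n]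
    (A : Matrix m n ℝ) : ℝ :=
  ∑ i, Real.sqrt ((show (Aᵀ * A).IsHermitian by
    simpa using Matrix.isHermitian_conjTranspose_mul_self A).eigenvalues i)

/-- The shape interaction matrix of a real `m × n` matrix `X`: the `n × n`
orthogonal projection matrix onto the row space of `X`. -/
noncomputable def SIM {m n : ℕ} (X : Matrix (Fin m) (Fin n) ℝ) :
    Matrix (Fin n) (Fin n) ℝ :=
  let U : Submodule ℝ (EuclideanSpace ℝ (Fin n)) :=
    Submodule.span ℝ (Set.range fun i => (WithLp.toLp 2 (X i) : EuclideanSpace ℝ (Fin n)))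
  LinearMap.toMatrix'
    ((WithLp.linearEquiv 2 ℝ (Fin n → ℝ)).toLinearMap ∘ₗ
      ((U.subtypeL.comp (U.orthogonalProjectionOnto)).toLinearMap :
        EuclideanSpace ℝ (Fin n) →ₗ[ℝ] EuclideanSpace ℝ (Fin n)) ∘ₗ
      (WithLp.linearEquiv 2 ℝ (Fin n → ℝ)).symm.toLinearMap :
      (Fin n → ℝ) →ₗ[ℝ] (Fin n → ℝ))


/-!
`P = SIM X` is the orthogonal projection onto the row space `R` of `X`, so `Pᵀ P = P` and the
singular values of `P` are its eigenvalues, all `0` or `1`: hence `‖P‖_* = tr P = dim R = rank X`.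
If `X = X Z`, then `Zᵀ` fixes `R`, whence `P Z = P`. Computing the trace in an orthonormal
eigenbasis `(vᵢ)` of `Zᵀ Z`, in which `‖Z‖_* = ∑ ‖Z vᵢ‖`,
`rank X = tr (P Z) = ∑ ⟪vᵢ, P Z vᵢ⟫ ≤ ∑ ‖P Z vᵢ‖ ≤ ∑ ‖Z vᵢ‖ = ‖Z‖_*`.
Equality forces `‖P (Z vᵢ)‖ = ‖Z vᵢ‖`, i.e. `P` fixes every `Z vᵢ`; so `P Z = Z` and `Z = P`.
-/

open scoped InnerProductSpace RealInnerProductSpace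

section StarProjection

variable {𝕜 E : Type*} [RCLike 𝕜] [NormedAddCommGroup E] [InnerProductSpace 𝕜 E] [CompleteSpace E]
  {p : E →L[𝕜] E}

theorem IsStarProjection.norm_apply_le (hp : IsStarProjection p) (x : E) : ‖p x‖ ≤ ‖x‖ := by
  obtain ⟨K, _, rfl⟩ := isStarProjection_iff_eq_starProjection.mp hp
  exact K.norm_starProjection_apply_le x

theorem IsStarProjection.apply_eq_of_norm_eq (hp : IsStarProjection p) {x : E}
    (hx : ‖p x‖ = ‖x‖) : p x = x := by
  obtain ⟨K, _, rfl⟩ := isStarProjection_iff_eq_starProjection.mp hp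
  exact K.starProjection_eq_self_iff.mpr ((K.mem_iff_norm_starProjection x).mpr hx)

end StarProjection

theorem Submodule.trace_starProjection {𝕜 E : Type*} [RCLike 𝕜] [NormedAddCommGroup E]
    [InnerProductSpace 𝕜 E] [FiniteDimensional 𝕜 E] (K : Submodule 𝕜 E) :
    LinearMap.trace 𝕜 E K.starProjection = Module.finrank 𝕜 K :=
  LinearMap.IsProj.trace
    ⟨K.starProjection_apply_mem, fun _ hx => K.starProjection_eq_self_iff.mpr hx⟩

namespace Matrix

variable {n : Type*} [Fintype n] [DecidableEq n]

theorem trace_eq_sum_inner_toEuclideanCLM {𝕜 : Type*} [RCLike 𝕜] (A : Matrix n n 𝕜)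
    (b : OrthonormalBasis n 𝕜 (EuclideanSpace 𝕜 n)) :
    A.trace = ∑ i, ⟪b i, toEuclideanCLM (𝕜 := 𝕜) A (b i)⟫_𝕜 :=
  (trace_toLin_eq A (EuclideanSpace.basisFun n 𝕜).toBasis).symm.trans
    (LinearMap.trace_eq_sum_inner _ b)

theorem trace_le_sum_norm_toEuclideanCLM (A : Matrix n n ℝ)
    (b : OrthonormalBasis n ℝ (EuclideanSpace ℝ n)) :
    A.trace ≤ ∑ i, ‖toEuclideanCLM (𝕜 := ℝ) A (b i)‖ := by
  rw [trace_eq_sum_inner_toEuclideanCLM A b]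
  gcongr with i
  simpa [b.orthonormal.1 i] using real_inner_le_norm (b i) (toEuclideanCLM (𝕜 := ℝ) A (b i))

end Matrix

section NuclearNorm

variable {n : Type*} [Fintype n]

theorem Matrix.isHermitian_transpose_mul_self (Z : Matrix n n ℝ) : (Zᵀ * Z).IsHermitian := by
  simpa using isHermitian_conjTranspose_mul_self Z

variable [DecidableEq n]

noncomputable def rightSingularBasis (Z : Matrix n n ℝ) :
    OrthonormalBasis n ℝ (EuclideanSpace ℝ n) :=
  Z.isHermitian_transpose_mul_self.eigenvectorBasis

theorem norm_toEuclideanCLM_rightSingularBasis (Z : Matrix n n ℝ) (i : n) :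
    ‖toEuclideanCLM (𝕜 := ℝ) Z (rightSingularBasis Z i)‖ =
      √(Z.isHermitian_transpose_mul_self.eigenvalues i) := by
  set H := Z.isHermitian_transpose_mul_self
  set v := rightSingularBasis Z i
  have hv : toEuclideanCLM (𝕜 := ℝ) (Zᵀ * Z) v = H.eigenvalues i • v :=
    WithLp.ofLp_injective 2 (H.mulVec_eigenvectorBasis i)
  rw [ContinuousLinearMap.apply_norm_eq_sqrt_inner_adjoint_right,
    ← ContinuousLinearMap.star_eq_adjoint, ← map_star, ← ContinuousLinearMap.mul_def, ← map_mul,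
    star_eq_conjTranspose, conjTranspose_eq_transpose_of_trivial, hv, real_inner_smul_right,
    real_inner_self_eq_norm_sq, (rightSingularBasis Z).orthonormal.1 i]
  simp

theorem nuclearNorm_eq_sum_norm (Z : Matrix n n ℝ) :
    nuclearNorm Z = ∑ i, ‖toEuclideanCLM (𝕜 := ℝ) Z (rightSingularBasis Z i)‖ := by
  simp only [norm_toEuclideanCLM_rightSingularBasis]
  rfl

end NuclearNorm

section TraceBound

variable {n : Type*} [Fintype n] [DecidableEq n]

theorem trace_mul_le_sum_norm_rightSingularBasis (P Z : Matrix n n ℝ) :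
    (P * Z).trace ≤
      ∑ i, ‖toEuclideanCLM (𝕜 := ℝ) P (toEuclideanCLM (𝕜 := ℝ) Z (rightSingularBasis Z i))‖ := by
  simpa only [map_mul, mul_apply_eq_comp] using
    trace_le_sum_norm_toEuclideanCLM (P * Z) (rightSingularBasis Z)

variable {P Z : Matrix n n ℝ}

theorem trace_mul_le_nuclearNorm (hP : ∀ x, ‖toEuclideanCLM (𝕜 := ℝ) P x‖ ≤ ‖x‖) :
    (P * Z).trace ≤ nuclearNorm Z := by
  refine (trace_mul_le_sum_norm_rightSingularBasis P Z).trans ?_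
  rw [nuclearNorm_eq_sum_norm]
  gcongr with i
  exact hP _

theorem norm_toEuclideanCLM_rightSingularBasis_eq_of_trace_mul_eq_nuclearNorm
    (hP : ∀ x, ‖toEuclideanCLM (𝕜 := ℝ) P x‖ ≤ ‖x‖) (h : (P * Z).trace = nuclearNorm Z)
    (i : n) :
    ‖toEuclideanCLM (𝕜 := ℝ) P (toEuclideanCLM (𝕜 := ℝ) Z (rightSingularBasis Z i))‖ =
      ‖toEuclideanCLM (𝕜 := ℝ) Z (rightSingularBasis Z i)‖ := by
  have hle (i : n) (_ : i ∈ Finset.univ) :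
      ‖toEuclideanCLM (𝕜 := ℝ) P (toEuclideanCLM (𝕜 := ℝ) Z (rightSingularBasis Z i))‖ ≤
        ‖toEuclideanCLM (𝕜 := ℝ) Z (rightSingularBasis Z i)‖ :=
    hP _
  refine (Finset.sum_eq_sum_iff_of_le hle).mp
    (le_antisymm (Finset.sum_le_sum hle) ?_) i (Finset.mem_univ i)
  rw [← nuclearNorm_eq_sum_norm, ← h]
  exact trace_mul_le_sum_norm_rightSingularBasis P Z

end TraceBound

namespace IsStarProjection

variable {n : Type*} [Fintype n] {P Z : Matrix n n ℝ}

theorem transpose_eq (hP : IsStarProjection P) : Pᵀ = P := by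
  rw [← conjTranspose_eq_transpose_of_trivial]
  exact hP.isSelfAdjoint

variable [DecidableEq n]

theorem norm_toEuclideanCLM_apply_le (hP : IsStarProjection P) (x : EuclideanSpace ℝ n) :
    ‖toEuclideanCLM (𝕜 := ℝ) P x‖ ≤ ‖x‖ :=
  (hP.map toEuclideanCLM).norm_apply_le x

theorem nuclearNorm_eq_trace (hP : IsStarProjection P) : nuclearNorm P = P.trace := by
  have hPP : Pᵀ * P = P := by rw [hP.transpose_eq, hP.isIdempotentElem.eq]
  have H := P.isHermitian_transpose_mul_self
  have h01 (i : n) : H.eigenvalues i = 0 ∨ H.eigenvalues i = 1 := by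
    have hi := H.eigenvalues_mem_spectrum_real i
    rw [show spectrum ℝ (Pᵀ * P) = spectrum ℝ P by rw [hPP]] at hi
    simpa using hP.isIdempotentElem.spectrum_subset ℝ hi
  calc nuclearNorm P = ∑ i, √(H.eigenvalues i) := rfl
    _ = ∑ i, H.eigenvalues i := by
        refine Finset.sum_congr rfl fun i _ => ?_
        rcases h01 i with h | h <;> simp [h]
    _ = (Pᵀ * P).trace := by simpa using H.trace_eq_sum_eigenvalues.symm
    _ = P.trace := by rw [hPP]

theorem mul_eq_of_trace_mul_eq_nuclearNorm (hP : IsStarProjection P)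
    (h : (P * Z).trace = nuclearNorm Z) : P * Z = Z := by
  have hp := hP.map (toEuclideanCLM (𝕜 := ℝ) (n := n))
  apply EquivLike.injective (toEuclideanCLM (𝕜 := ℝ) (n := n))
  apply ContinuousLinearMap.coe_injective
  refine (rightSingularBasis Z).toBasis.ext fun i => ?_
  simp only [map_mul, ContinuousLinearMap.coe_coe, OrthonormalBasis.coe_toBasis, mul_apply_eq_comp]
  exact hp.apply_eq_of_norm_eq
    (norm_toEuclideanCLM_rightSingularBasis_eq_of_trace_mul_eq_nuclearNorm hp.norm_apply_le h i)

end IsStarProjection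

noncomputable def Matrix.euclideanRowSpace {m n : Type*} (X : Matrix m n ℝ) :
    Submodule ℝ (EuclideanSpace ℝ n) :=
  Submodule.span ℝ (Set.range fun i => WithLp.toLp 2 (X i))

theorem Matrix.finrank_euclideanRowSpace {m n : Type*} [Finite m] [Fintype n]
    (X : Matrix m n ℝ) : Module.finrank ℝ X.euclideanRowSpace = X.rank := by
  rw [rank_eq_finrank_span_row, ← LinearEquiv.finrank_map_eq (WithLp.linearEquiv 2 ℝ (n → ℝ)),
    euclideanRowSpace, Submodule.map_span, ← Set.range_comp]
  rfl

section SIM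

variable {m n : ℕ} (X : Matrix (Fin m) (Fin n) ℝ)

theorem toEuclideanCLM_SIM :
    toEuclideanCLM (𝕜 := ℝ) (SIM X) = X.euclideanRowSpace.starProjection := by
  ext x : 1
  apply WithLp.ofLp_injective 2
  rw [ofLp_toEuclideanCLM, ← Matrix.toLin'_apply, SIM, Matrix.toLin'_toMatrix']
  rfl

theorem isStarProjection_SIM : IsStarProjection (SIM X) := by
  rw [← (toEuclideanCLM (𝕜 := ℝ) (n := Fin n)).symm_apply_apply (SIM X), toEuclideanCLM_SIM]
  exact isStarProjection_starProjection.map (toEuclideanCLM (𝕜 := ℝ) (n := Fin n)).symm.toStarAlgHom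

theorem trace_SIM : (SIM X).trace = X.rank := by
  rw [← trace_toLin_eq (SIM X) (EuclideanSpace.basisFun (Fin n) ℝ).toBasis,
    ← toEuclideanLin_eq_toLin_orthonormal, ← coe_toEuclideanCLM_eq_toEuclideanLin,
    toEuclideanCLM_SIM, Submodule.trace_starProjection, X.finrank_euclideanRowSpace]

theorem mul_SIM : X * SIM X = X := by
  refine funext fun i => ?_
  rw [mul_apply_eq_vecMul, ← (isStarProjection_SIM X).transpose_eq, vecMul_transpose]
  have hrow : WithLp.toLp 2 (X i) ∈ X.euclideanRowSpace := Submodule.subset_span ⟨i, rfl⟩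
  simpa [← toEuclideanCLM_SIM] using
    congrArg WithLp.ofLp (X.euclideanRowSpace.starProjection_eq_self_iff.mpr hrow)

theorem SIM_mul_of_mul_eq {Z : Matrix (Fin n) (Fin n) ℝ} (h : X * Z = X) : SIM X * Z = SIM X := by
  have hrow (i : Fin m) : Zᵀ *ᵥ X i = X i := by rw [mulVec_transpose, ← mul_apply_eq_vecMul, h]
  have hfix : X.euclideanRowSpace ≤
      LinearMap.eqLocus (toEuclideanCLM (𝕜 := ℝ) Zᵀ : _ →ₗ[ℝ] _) LinearMap.id :=
    Submodule.span_le.mpr (by rintro _ ⟨i, rfl⟩; exact WithLp.ofLp_injective 2 (hrow i))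
  have hZP : Zᵀ * SIM X = SIM X := by
    apply EquivLike.injective (toEuclideanCLM (𝕜 := ℝ) (n := Fin n))
    rw [map_mul, toEuclideanCLM_SIM]
    ext1 x
    exact hfix (X.euclideanRowSpace.starProjection_apply_mem x)
  simpa [(isStarProjection_SIM X).transpose_eq] using congrArg transpose hZP

end SIM

theorem sim_unique_minimizer_general {m n : ℕ} (X : Matrix (Fin m) (Fin n) ℝ) :
    X * SIM X = X ∧
    nuclearNorm (SIM X) = (X.rank : ℝ) ∧
    (∀ Z : Matrix (Fin n) (Fin n) ℝ, X = X * Z → (X.rank : ℝ) ≤ nuclearNorm Z) ∧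
    (∀ Z : Matrix (Fin n) (Fin n) ℝ, X = X * Z → nuclearNorm Z = (X.rank : ℝ) →
      Z = SIM X) := by
  have hP := isStarProjection_SIM X
  refine ⟨mul_SIM X, by rw [hP.nuclearNorm_eq_trace, trace_SIM], fun Z hZ => ?_,
    fun Z hZ hnorm => ?_⟩
  · rw [← trace_SIM, ← SIM_mul_of_mul_eq X hZ.symm]
    exact trace_mul_le_nuclearNorm hP.norm_toEuclideanCLM_apply_le
  · have hPZ := SIM_mul_of_mul_eq X hZ.symm
    exact (hP.mul_eq_of_trace_mul_eq_nuclearNorm (by rw [hPZ, trace_SIM, hnorm])).symm.trans hPZ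

/-- For a nonzero real `m × n` matrix `X`, the shape interaction matrix `SIM X` is the
unique solution of: minimize `‖Z‖₊` subject to `X = X * Z`, and the minimum value is
`rank X`. Namely: (i) `X * SIM X = X`; (ii) `‖SIM X‖₊ = rank X`; (iii) every feasible
`Z` has nuclear norm at least `rank X`; (iv) any feasible `Z` with nuclear norm equal
to `rank X` is `SIM X`. -/
theorem sim_unique_minimizer {m n : ℕ} (X : Matrix (Fin m) (Fin n) ℝ) (hX : X ≠ 0) :
    X * SIM X = X ∧
    nuclearNorm (SIM X) = (X.rank : ℝ) ∧
    (∀ Z : Matrix (Fin n) (Fin n) ℝ, X = X * Z → (X.rank : ℝ) ≤ nuclearNorm Z) ∧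
    (∀ Z : Matrix (Fin n) (Fin n) ℝ, X = X * Z → nuclearNorm Z = (X.rank : ℝ) →
      Z = SIM X) :=
  sim_unique_minimizer_general X
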